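/- arXiv:1710.08291 — 2 statements merged into one kernel-verified Lean document; each statement's English description precedes it below -/
import Mathlib

section
/- Let P : ℕ → ℕ be a monotone increasing function, and for a positive integer x and a power of two y define T(x,y) = 4·x·y·(∑_{z=0}^{log₂ y} P(2^z)). Then for any positive integers x, z with z a power of two and 2z ≤ x, the inequality 2·T(x,z) + (2z(x+z) + 2x + z)·P(2z) ≤ T(x,2z) holds. -/
/-- `T x k = 4 * x * 2^k * ∑_{j=0}^{k} P(2^j)`, the bound for `y = 2^k`. -/
def Tbound (P : ℕ → ℕ) (x k : ℕ) : ℕ :=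
  4 * x * 2 ^ k * ∑ j ∈ Finset.range (k + 1), P (2 ^ j)

theorem inductive_step_inequality (P : ℕ → ℕ) (hP : Monotone P)
    (hP1 : ∀ n, 1 ≤ n → 1 ≤ P n) (x k : ℕ) (hx : 0 < x)
    (h2z : 2 * 2 ^ k ≤ x) :
    2 * Tbound P x k + (2 * 2 ^ k * (x + 2 ^ k) + 2 * x + 2 ^ k) * P (2 * 2 ^ k)
      ≤ Tbound P x (k + 1) := by
  have hpow : (1:ℕ) ≤ 2 ^ k := Nat.one_le_two_pow
  have hcoef : 2 * 2 ^ k * (x + 2 ^ k) + 2 * x + 2 ^ k ≤ 8 * x * 2 ^ k := by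
    nlinarith [Nat.mul_le_mul_right (2 ^ k) h2z, Nat.mul_le_mul_left x hpow]
  have hmul := Nat.mul_le_mul_right (P (2 * 2 ^ k)) hcoef
  unfold Tbound
  rw [Finset.sum_range_succ (n := k + 1),
    show (2:ℕ) ^ (k + 1) = 2 * 2 ^ k from by ring,
    show 4 * x * (2 * 2 ^ k) * (∑ j ∈ Finset.range (k + 1), P (2 ^ j) + P (2 * 2 ^ k))
      = 2 * (4 * x * 2 ^ k * ∑ j ∈ Finset.range (k + 1), P (2 ^ j))
        + 8 * x * 2 ^ k * P (2 * 2 ^ k) from by ring]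
  exact Nat.add_le_add_left hmul _
end

section
/- Suppose an exploration procedure Explo(y) executed by agent i takes time at most x·P(y) whenever x ≥ α, where P is a monotone increasing polynomial bound. Define the duration D(h) of Phase(h) as D(h) = E(h) + 4h²·(∑_{j=0}^{log₂ h} P(2^j)) + h·(2hP(h) + 2E(h)) + hP(2h) + E(h), where E(h) ≤ x·P(h) is the time for one execution of Explo(h). Then for any positive integer x ≥ α and any power of two y ≤ x, the total time to execute Phase(1), Phase(2), ..., Phase(y/2) followed by one Explo(y) is at most T(x,y) = 4·x·y·(∑_{j=0}^{log₂ y} P(2^j)). -/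
/-- Duration of `Phase(h)`: one `Explo(h)`, a wait of `4h²·∑_{j=0}^{log₂ h} P(2^j)`,
`h` iterations each consisting of a wait `2hP(h)` and two executions of `Explo(h)`,
a wait `hP(2h)`, and a final `Explo(h)`.  Here `h = 2^j` and `E` gives the
(abstract) duration of one `Explo(h)`. -/
def phaseDuration (P E : ℕ → ℕ) (j : ℕ) : ℕ :=
  E (2 ^ j) + 4 * (2 ^ j) ^ 2 * (∑ i ∈ Finset.range (j + 1), P (2 ^ i)) +
    2 ^ j * (2 * 2 ^ j * P (2 ^ j) + 2 * E (2 ^ j)) +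
    2 ^ j * P (2 * 2 ^ j) + E (2 ^ j)

theorem phases_duration_bound (P E : ℕ → ℕ) (hP : Monotone P)
    (hP1 : ∀ n, 1 ≤ n → 1 ≤ P n) (α : ℕ) (hα : 1 ≤ α)
    (hE : ∀ x h : ℕ, α ≤ x → 0 < E h ∧ E h ≤ x * P h)
    (x k : ℕ) (hx : α ≤ x) (hy : 2 ^ k ≤ x) :
    (∑ j ∈ Finset.range k, phaseDuration P E j) + E (2 ^ k) ≤ Tbound P x k := by
  induction k with
  | zero =>
      have h1 : E 1 ≤ x * P 1 := (hE x 1 hx).2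
      simp only [Finset.sum_range_zero, Tbound, pow_zero, Finset.sum_range_one, zero_add]
      have hx1 : 1 ≤ x := le_trans hα hx
      nlinarith [hP1 1 le_rfl]
  | succ k ih =>
      have ht1 : (1:ℕ) ≤ 2 ^ k := Nat.one_le_two_pow
      have h2t : 2 * 2 ^ k ≤ x := by
        have h : 2 ^ (k+1) = 2 * 2 ^ k := by ring
        rw [h] at hy; exact hy
      have htx : 2 ^ k ≤ x := le_trans (by linarith) h2t
      have ih' := ih htx
      have he : E (2 ^ k) ≤ x * P (2 ^ k) := (hE x (2 ^ k) hx).2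
      have he' : E (2 ^ (k+1)) ≤ x * P (2 ^ (k+1)) := (hE x (2 ^ (k+1)) hx).2
      have hpq : P (2 ^ k) ≤ P (2 ^ (k+1)) := hP (Nat.pow_le_pow_right (by norm_num) (Nat.le_succ k))
      have h2pow : 2 * 2 ^ k = 2 ^ (k+1) := by ring
      rw [Finset.sum_range_succ]
      set S := ∑ j ∈ Finset.range k, phaseDuration P E j with hS
      unfold Tbound phaseDuration
      rw [Finset.sum_range_succ (fun i => P (2 ^ i)) (k+1), h2pow]
      unfold Tbound at ih'
      set s := ∑ i ∈ Finset.range (k+1), P (2 ^ i)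
      set p := P (2 ^ k)
      set q := P (2 ^ (k+1))
      set e := E (2 ^ k)
      set f := E (2 ^ (k+1))
      set t := (2:ℕ) ^ k with htdef
      have hx1 : 1 ≤ x := le_trans hα hx
      have hA : 4 * t ^ 2 * s ≤ 2 * (x * t * s) := by
        calc 4 * t ^ 2 * s = (2 * t) * (2 * (t * s)) := by ring
          _ ≤ x * (2 * (t * s)) := Nat.mul_le_mul_right _ h2t
          _ = 2 * (x * t * s) := by ring
      have hB : t * (2 * t * p) ≤ x * t * q := by
        calc t * (2 * t * p) = (2 * t) * (t * p) := by ring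
          _ ≤ x * (t * p) := Nat.mul_le_mul_right _ h2t
          _ ≤ x * (t * q) := Nat.mul_le_mul_left _ (Nat.mul_le_mul_left _ hpq)
          _ = x * t * q := by ring
      have hC : t * (2 * e) ≤ 2 * (x * t * q) := by
        calc t * (2 * e) = 2 * (t * e) := by ring
          _ ≤ 2 * (t * (x * p)) := Nat.mul_le_mul_left _ (Nat.mul_le_mul_left _ he)
          _ = 2 * (x * (t * p)) := by ring
          _ ≤ 2 * (x * (t * q)) := Nat.mul_le_mul_left _ (Nat.mul_le_mul_left _ (Nat.mul_le_mul_left _ hpq))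
          _ = 2 * (x * t * q) := by ring
      have hD : t * q ≤ x * t * q := by
        calc t * q = 1 * (t * q) := by ring
          _ ≤ x * (t * q) := Nat.mul_le_mul_right _ hx1
          _ = x * t * q := by ring
      have hF : f ≤ x * t * q := by
        calc f ≤ x * q := he'
          _ = x * (1 * q) := by ring
          _ ≤ x * (t * q) := Nat.mul_le_mul_left _ (Nat.mul_le_mul_right _ ht1)
          _ = x * t * q := by ring
      have hEe : e ≤ x * t * q := by
        calc e ≤ x * p := he
          _ ≤ x * q := Nat.mul_le_mul_left _ hpq
          _ = x * (1 * q) := by ring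
          _ ≤ x * (t * q) := Nat.mul_le_mul_left _ (Nat.mul_le_mul_right _ ht1)
          _ = x * t * q := by ring
      have hdist : t * (2 * t * p + 2 * e) = t * (2 * t * p) + t * (2 * e) := by ring
      have hr : 4 * x * 2 ^ (k+1) * (s + q) = 8 * (x * t * s) + 8 * (x * t * q) := by
        rw [← h2pow]; ring
      rw [hr, ← h2pow, hdist]
      have hts : 4 * x * t * s = 4 * (x * t * s) := by ring
      rw [hts] at ih'
      linarith [ih', hA, hB, hC, hD, hF, hEe]
end
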